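/- With the hypotheses of the previous statement (q : S² × T × T → X continuous, symmetric under (x,t₁,t₂) ↦ (−x,t₂,t₁), with q(x,t,t) independent of x), the subgroup of π₁(X, x₀) given by the image of π₁(T, t₀) under the map ι_* induced by ι(t) = q((1,0), t, t) is commutative. -/

import Mathlib

/-- The 2-sphere, realized inside `ℂ × ℝ`. -/
abbrev Sph2 : Type := {p : ℂ × ℝ // ‖p.1‖ ^ 2 + p.2 ^ 2 = 1}

/-- The antipodal map on the sphere. -/
def Sph2.neg (x : Sph2) : Sph2 :=
  ⟨-x.1, by simpa [neg_sq] using x.2⟩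

/-- The point `(1, 0)` of the sphere. -/
def Sph2.pt : Sph2 := ⟨((1 : ℂ), (0 : ℝ)), by norm_num⟩

/-!
Write `G(t₁, t₂) = q((1,0), t₁, t₂)`, so that `ι` is `G` on the diagonal. A loop `γ` in `T` gives
the loops `L γ = G(γ, t₀)` and `R γ = G(t₀, γ)`. Contracting the square `γ × γ` onto its boundary,
`ι γ ≃ L γ · R γ`, and likewise (square `γ₁ × γ₂`) `L γ₁` and `R γ₂` commute. Moving the first
coordinate of the sphere along a half great circle from `(1,0)` to its antipode, the symmetry of `q`
deforms `L γ` into `R γ`; the basepoint stays put because `q` is independent of the sphere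
coordinate on the diagonal. Hence `[ι γ] = [L γ]²`, and `[L γ₁]` commutes with `[L γ₂] = [R γ₂]`.
-/

namespace Path

variable {X X' Y : Type*} [TopologicalSpace X] [TopologicalSpace X'] [TopologicalSpace Y]
  {a b : X} {a' b' : X'}

theorem prod_homotopic_trans_fst_snd (p : Path a b) (p' : Path a' b') :
    (p.prod p').Homotopic ((p.prod (refl a')).trans ((refl b).prod p')) := by
  rw [trans_prod_eq_prod_trans]
  exact ⟨Homotopic.prodHomotopy (Homotopy.transRefl p).symm (Homotopy.reflTrans p').symm⟩

theorem prod_homotopic_trans_snd_fst (p : Path a b) (p' : Path a' b') :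
    (p.prod p').Homotopic (((refl a).prod p').trans (p.prod (refl b'))) := by
  rw [trans_prod_eq_prod_trans]
  exact ⟨Homotopic.prodHomotopy (Homotopy.reflTrans p).symm (Homotopy.transRefl p').symm⟩

/-- `pb`, `pr`, `pl`, `pt` are the bottom, right, left and top edges of the image under `G` of the
rectangle `p × p'`, prescribed pointwise so that their endpoints need only be propositionally equal
to the images of the corners. -/
theorem Homotopic.of_map_prod_boundary {G : X × X' → Y} (hG : Continuous G)
    (p : Path a b) (p' : Path a' b') {y₀₀ y₁₀ y₀₁ y₁₁ : Y}
    (pb : Path y₀₀ y₁₀) (pr : Path y₁₀ y₁₁) (pl : Path y₀₀ y₀₁) (pt : Path y₀₁ y₁₁)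
    (hb : ∀ s, pb s = G (p s, a')) (hr : ∀ s, pr s = G (b, p' s))
    (hl : ∀ s, pl s = G (a, p' s)) (ht : ∀ s, pt s = G (p s, b')) :
    (pb.trans pr).Homotopic (pl.trans pt) := by
  obtain rfl : y₀₀ = G (a, a') := by simpa using hb 0
  obtain rfl : y₁₀ = G (b, a') := by simpa using hb 1
  obtain rfl : y₀₁ = G (a, b') := by simpa using hl 1
  obtain rfl : y₁₁ = G (b, b') := by simpa using hr 1
  obtain rfl : pb = (p.prod (Path.refl a')).map hG := Path.ext (funext hb)
  obtain rfl : pr = ((Path.refl b).prod p').map hG := Path.ext (funext hr)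
  obtain rfl : pl = ((Path.refl a).prod p').map hG := Path.ext (funext hl)
  obtain rfl : pt = (p.prod (Path.refl b')).map hG := Path.ext (funext ht)
  rw [← map_trans, ← map_trans]
  exact ((prod_homotopic_trans_fst_snd p p').symm.trans
    (prod_homotopic_trans_snd_fst p p')).map ⟨G, hG⟩

theorem Homotopic.map_diag_trans {G : X × X → Y} (hG : Continuous G) (γ : Path a b) :
    (γ.map (hG.comp (continuous_id.prodMk continuous_id))).Homotopic
      ((γ.map hG.curry_left).trans (γ.map hG.curry_right)) := by
  have h := (prod_homotopic_trans_fst_snd γ γ).map ⟨G, hG⟩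
  rw [map_trans] at h
  exact h

end Path

namespace FundamentalGroup

variable {X : Type*} [TopologicalSpace X] {x : X}

def ofLoop (p : Path x x) : FundamentalGroup X x :=
  fromPath (.mk p)

theorem ofLoop_eq_ofLoop_iff {p q : Path x x} : ofLoop p = ofLoop q ↔ p.Homotopic q :=
  Path.Homotopic.Quotient.eq

theorem ofLoop_trans (p q : Path x x) : ofLoop (p.trans q) = ofLoop q * ofLoop p :=
  Path.Homotopic.Quotient.mk_trans p q

theorem commute_ofLoop_iff (p q : Path x x) :
    Commute (ofLoop p) (ofLoop q) ↔ (p.trans q).Homotopic (q.trans p) := by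
  rw [commute_iff_eq, ← ofLoop_trans, ← ofLoop_trans, eq_comm, ofLoop_eq_ofLoop_iff]

end FundamentalGroup

noncomputable def Sph2.halfEquator : Path Sph2.pt Sph2.pt.neg where
  toFun t := ⟨(Complex.exp ((Real.pi * t : ℝ) * Complex.I), 0), by
    rw [Complex.norm_exp_ofReal_mul_I]; norm_num⟩
  continuous_toFun := by fun_prop
  source' := by ext <;> simp [Sph2.pt]
  target' := by ext <;> simp [Sph2.pt, Sph2.neg, Complex.exp_pi_mul_I]

theorem map_left_homotopic_map_right {T X : Type*} [TopologicalSpace T] [TopologicalSpace X]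
    {q : Sph2 × T × T → X} (hq : Continuous q)
    (hsym : ∀ (x : Sph2) (t₁ t₂ : T), q (x, t₁, t₂) = q (x.neg, t₂, t₁))
    (hdiag : ∀ (x y : Sph2) (t : T), q (x, t, t) = q (y, t, t)) {t₀ : T} (γ : Path t₀ t₀) :
    (γ.map (f := fun t => q (Sph2.pt, t, t₀)) (by fun_prop)).Homotopic
      (γ.map (f := fun t => q (Sph2.pt, t₀, t)) (by fun_prop)) := by
  have hH : Continuous fun x : Sph2 × T => q (x.1, x.2, t₀) := by fun_prop
  have h : ((Path.refl _).trans (γ.map (f := fun t => q (Sph2.pt, t₀, t)) (by fun_prop))).Homotopic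
      ((γ.map (f := fun t => q (Sph2.pt, t, t₀)) (by fun_prop)).trans (Path.refl _)) :=
    Path.Homotopic.of_map_prod_boundary hH Sph2.halfEquator γ _ _ _ _ (fun _ => hdiag _ _ _)
      (fun s => hsym _ _ (γ s)) (fun _ => rfl) (fun _ => hdiag _ _ _)
  exact (Path.Homotopic.trans_refl _).symm.trans (h.symm.trans (Path.Homotopic.refl_trans _))

open FundamentalGroup in
theorem stmt_13_general (T X : Type*) [TopologicalSpace T]
    [TopologicalSpace X] (t₀ : T)
    (q : Sph2 × T × T → X) (hq : Continuous q)
    (hsym : ∀ (x : Sph2) (t₁ t₂ : T), q (x, t₁, t₂) = q (x.neg, t₂, t₁))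
    (hdiag : ∀ (x y : Sph2) (t : T), q (x, t, t) = q (y, t, t))
    (γ₁ γ₂ : Path t₀ t₀) :
    Path.Homotopic
      ((γ₁.map (show Continuous fun t => q (Sph2.pt, t, t) from
          hq.comp (continuous_const.prodMk (continuous_id.prodMk continuous_id)))).trans
        (γ₂.map (show Continuous fun t => q (Sph2.pt, t, t) from
          hq.comp (continuous_const.prodMk (continuous_id.prodMk continuous_id)))))
      ((γ₂.map (show Continuous fun t => q (Sph2.pt, t, t) from
          hq.comp (continuous_const.prodMk (continuous_id.prodMk continuous_id)))).trans
        (γ₁.map (show Continuous fun t => q (Sph2.pt, t, t) from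
          hq.comp (continuous_const.prodMk (continuous_id.prodMk continuous_id))))) := by
  have hG : Continuous fun t : T × T => q (Sph2.pt, t.1, t.2) := by fun_prop
  let L (γ : Path t₀ t₀) : FundamentalGroup X (q (Sph2.pt, t₀, t₀)) :=
    ofLoop (γ.map hG.curry_left)
  have hLR (γ : Path t₀ t₀) : L γ = ofLoop (γ.map hG.curry_right) :=
    ofLoop_eq_ofLoop_iff.2 (map_left_homotopic_map_right hq hsym hdiag γ)
  have hι (γ : Path t₀ t₀) :
      ofLoop (γ.map (f := fun t => q (Sph2.pt, t, t)) (by fun_prop)) = L γ ^ 2 := by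
    refine (ofLoop_eq_ofLoop_iff.2 (Path.Homotopic.map_diag_trans hG γ)).trans ?_
    rw [ofLoop_trans, ← hLR, sq]
  have hL : Commute (L γ₁) (L γ₂) := by
    rw [hLR γ₂, commute_ofLoop_iff]
    exact Path.Homotopic.of_map_prod_boundary hG γ₁ γ₂ _ _ _ _
      (fun _ => rfl) (fun _ => rfl) (fun _ => rfl) (fun _ => rfl)
  rw [← commute_ofLoop_iff, hι, hι]
  exact hL.pow_pow 2 2

/-- The image of `π₁(T, t₀)` under the map induced by `ι(t) = q((1,0), t, t)` is
commutative: the images of any two loops commute up to path homotopy. -/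
theorem stmt_13 (T X : Type*) [TopologicalSpace T] [CompactSpace T] [T2Space T]
    [TopologicalSpace X] (t₀ : T) (x₀ : X)
    (q : Sph2 × T × T → X) (hq : Continuous q)
    (hbase : q (Sph2.pt, t₀, t₀) = x₀)
    (hsym : ∀ (x : Sph2) (t₁ t₂ : T), q (x, t₁, t₂) = q (x.neg, t₂, t₁))
    (hdiag : ∀ (x y : Sph2) (t : T), q (x, t, t) = q (y, t, t))
    (γ₁ γ₂ : Path t₀ t₀) :
    Path.Homotopic
      ((γ₁.map (show Continuous fun t => q (Sph2.pt, t, t) from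
          hq.comp (continuous_const.prodMk (continuous_id.prodMk continuous_id)))).trans
        (γ₂.map (show Continuous fun t => q (Sph2.pt, t, t) from
          hq.comp (continuous_const.prodMk (continuous_id.prodMk continuous_id)))))
      ((γ₂.map (show Continuous fun t => q (Sph2.pt, t, t) from
          hq.comp (continuous_const.prodMk (continuous_id.prodMk continuous_id)))).trans
        (γ₁.map (show Continuous fun t => q (Sph2.pt, t, t) from
          hq.comp (continuous_const.prodMk (continuous_id.prodMk continuous_id))))) :=
  stmt_13_general T X t₀ q hq hsym hdiag γ₁ γ₂
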